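/- arXiv:1010.0810 — 2 statements merged into one kernel-verified Lean document; each statement's English description precedes it below -/
import Mathlib

section
/- Let Θ ⊆ ℝ be open. Let p : Θ × ℝ → ℝ be strictly positive with ∫_ℝ p(θ,v) dv = 1 for every θ ∈ Θ, and let g : Θ × ℝ × ℝ → ℝ be strictly positive with ∫_ℝ g(θ,v,y) dy = 1 for every (θ,v), both partially differentiable in θ and in v, and assume all integrands appearing below are integrable. Suppose: (i) ∫_ℝ ∂g/∂θ(θ,v,y) dy = 0 and ∫_ℝ ∂g/∂v(θ,v,y) dy = 0 for every θ ∈ Θ and v ∈ ℝ (conditional first Bartlett identities), and (ii) ∫_ℝ ∂p/∂θ(θ,v) dv = 0 for every θ ∈ Θ. Define the h-loglikelihood h(θ,v;y) = log g(θ,v,y) + log p(θ,v) and let E_θ denote integration of functions of (y,v) against the joint density (y,v) ↦ g(θ,v,y)·p(θ,v) on ℝ². Then for every θ ∈ Θ one has E_θ[∂h/∂θ] = 0 and E_θ[∂h/∂v] = ∫_ℝ ∂p/∂v(θ,v) dv; consequently the first Bartlett identity for the h-likelihood, E_θ[∂h/∂θ] = 0 and E_θ[∂h/∂v] = 0 for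 all θ ∈ Θ, holds if and only if ∫_ℝ ∂p/∂v(θ,v) dv = 0 for all θ ∈ Θ. -/
open MeasureTheory Real

/-! Multiplying the score of `h = log g + log p` by the joint density `g * p` gives
`∂g * p + ∂p * g`. Integrating over `y` first, the conditional identity `∫ ∂g dy = 0` kills
the first term and `∫ g dy = 1` reduces the second to `∂p`, so `E_θ` of the score is the
integral of `∂p` over `v`: zero for `∂/∂θ` by the marginal identity, and `∫ ∂p/∂v dv` for
`∂/∂v`. -/

theorem deriv_log_add_log_mul {a b : ℝ → ℝ} {x : ℝ} (ha : DifferentiableAt ℝ a x)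
    (hb : DifferentiableAt ℝ b x) (ha0 : a x ≠ 0) (hb0 : b x ≠ 0) :
    deriv (fun t => Real.log (a t) + Real.log (b t)) x * (a x * b x) =
      deriv a x * b x + deriv b x * a x := by
  have hderiv : HasDerivAt (fun t => Real.log (a t) + Real.log (b t))
      (deriv a x / a x + deriv b x / b x) x :=
    (ha.hasDerivAt.log ha0).add (hb.hasDerivAt.log hb0)
  rw [hderiv.deriv]
  field_simp

theorem integral_prod_score_mul_density {α β : Type*} [MeasurableSpace α]
    [MeasurableSpace β] {μ : Measure α} {ν : Measure β} [SFinite μ] [SFinite ν]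
    {score : α × β → ℝ} {g dg : β → α → ℝ} {p dp : β → ℝ}
    (hscore : ∀ z : α × β,
      score z * (g z.2 z.1 * p z.2) = dg z.2 z.1 * p z.2 + dp z.2 * g z.2 z.1)
    (hint : Integrable (fun z => score z * (g z.2 z.1 * p z.2)) (μ.prod ν))
    (hg_one : ∀ v, ∫ y, g v y ∂μ = 1) (hdg_int : ∀ v, Integrable (dg v) μ)
    (hdg_zero : ∀ v, ∫ y, dg v y ∂μ = 0) :
    ∫ z, score z * (g z.2 z.1 * p z.2) ∂(μ.prod ν) = ∫ v, dp v ∂ν := by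
  have hg_int : ∀ v, Integrable (g v) μ := fun v =>
    Integrable.of_integral_ne_zero (by rw [hg_one v]; exact one_ne_zero)
  simp_rw [hscore] at hint ⊢
  rw [integral_prod_symm _ hint]
  refine integral_congr_ae (Filter.Eventually.of_forall fun v => ?_)
  simp only
  rw [integral_add ((hdg_int v).mul_const _) ((hg_int v).const_mul _), integral_mul_const,
    integral_const_mul, hdg_zero v, hg_one v]
  ring

theorem stmt_0_general
    (Θ : Set ℝ)
    (p : ℝ → ℝ → ℝ) (g : ℝ → ℝ → ℝ → ℝ)
    (hp_pos : ∀ θ ∈ Θ, ∀ v : ℝ, 0 < p θ v)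
    (hg_pos : ∀ θ ∈ Θ, ∀ v y : ℝ, 0 < g θ v y)
    (hg_one : ∀ θ ∈ Θ, ∀ v : ℝ, (∫ y : ℝ, g θ v y) = 1)
    (hp_diffθ : ∀ θ ∈ Θ, ∀ v : ℝ, DifferentiableAt ℝ (fun t => p t v) θ)
    (hp_diffv : ∀ θ ∈ Θ, ∀ v : ℝ, DifferentiableAt ℝ (fun w => p θ w) v)
    (hg_diffθ : ∀ θ ∈ Θ, ∀ v y : ℝ, DifferentiableAt ℝ (fun t => g t v y) θ)
    (hg_diffv : ∀ θ ∈ Θ, ∀ v y : ℝ, DifferentiableAt ℝ (fun w => g θ w y) v)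
    -- integrability of all integrands appearing below
    (hint_gθ : ∀ θ ∈ Θ, ∀ v : ℝ, Integrable (fun y : ℝ => deriv (fun t => g t v y) θ))
    (hint_gv : ∀ θ ∈ Θ, ∀ v : ℝ, Integrable (fun y : ℝ => deriv (fun w => g θ w y) v))
    (hint_hθ : ∀ θ ∈ Θ, Integrable (fun z : ℝ × ℝ =>
      deriv (fun t => Real.log (g t z.2 z.1) + Real.log (p t z.2)) θ * (g θ z.2 z.1 * p θ z.2)))
    (hint_hv : ∀ θ ∈ Θ, Integrable (fun z : ℝ × ℝ =>
      deriv (fun w => Real.log (g θ w z.1) + Real.log (p θ w)) z.2 * (g θ z.2 z.1 * p θ z.2)))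
    -- (i) conditional first Bartlett identities for g
    (hBg_θ : ∀ θ ∈ Θ, ∀ v : ℝ, (∫ y : ℝ, deriv (fun t => g t v y) θ) = 0)
    (hBg_v : ∀ θ ∈ Θ, ∀ v : ℝ, (∫ y : ℝ, deriv (fun w => g θ w y) v) = 0)
    -- (ii) first Bartlett identity for p in θ
    (hBp_θ : ∀ θ ∈ Θ, (∫ v : ℝ, deriv (fun t => p t v) θ) = 0) :
    (∀ θ ∈ Θ,
      (∫ z : ℝ × ℝ,
        deriv (fun t => Real.log (g t z.2 z.1) + Real.log (p t z.2)) θ *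
          (g θ z.2 z.1 * p θ z.2)) = 0 ∧
      (∫ z : ℝ × ℝ,
        deriv (fun w => Real.log (g θ w z.1) + Real.log (p θ w)) z.2 *
          (g θ z.2 z.1 * p θ z.2)) = ∫ v : ℝ, deriv (fun w => p θ w) v) ∧
    ((∀ θ ∈ Θ,
      (∫ z : ℝ × ℝ,
        deriv (fun t => Real.log (g t z.2 z.1) + Real.log (p t z.2)) θ *
          (g θ z.2 z.1 * p θ z.2)) = 0 ∧
      (∫ z : ℝ × ℝ,
        deriv (fun w => Real.log (g θ w z.1) + Real.log (p θ w)) z.2 *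
          (g θ z.2 z.1 * p θ z.2)) = 0) ↔
      (∀ θ ∈ Θ, (∫ v : ℝ, deriv (fun w => p θ w) v) = 0)) := by
  have key : ∀ θ ∈ Θ,
      (∫ z : ℝ × ℝ,
        deriv (fun t => Real.log (g t z.2 z.1) + Real.log (p t z.2)) θ *
          (g θ z.2 z.1 * p θ z.2)) = 0 ∧
      (∫ z : ℝ × ℝ,
        deriv (fun w => Real.log (g θ w z.1) + Real.log (p θ w)) z.2 *
          (g θ z.2 z.1 * p θ z.2)) = ∫ v : ℝ, deriv (fun w => p θ w) v := fun θ hθ =>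
    ⟨(integral_prod_score_mul_density
        (fun z => deriv_log_add_log_mul (hg_diffθ θ hθ z.2 z.1) (hp_diffθ θ hθ z.2)
          (hg_pos θ hθ z.2 z.1).ne' (hp_pos θ hθ z.2).ne')
        (hint_hθ θ hθ) (hg_one θ hθ) (hint_gθ θ hθ) (hBg_θ θ hθ)).trans (hBp_θ θ hθ),
      integral_prod_score_mul_density
        (fun z => deriv_log_add_log_mul (hg_diffv θ hθ z.2 z.1) (hp_diffv θ hθ z.2)
          (hg_pos θ hθ z.2 z.1).ne' (hp_pos θ hθ z.2).ne')
        (hint_hv θ hθ) (hg_one θ hθ) (hint_gv θ hθ) (hBg_v θ hθ)⟩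
  exact ⟨key, fun H θ hθ => (key θ hθ).2.symm.trans (H θ hθ).2,
    fun H θ hθ => ⟨(key θ hθ).1, (key θ hθ).2.trans (H θ hθ)⟩⟩

/-- First Bartlett identity for the h-likelihood (paper's Theorem 1, first part).

`Θ ⊆ ℝ` is open; `p θ v` is the marginal density of the unobservable `v` and
`g θ v y` the conditional density of the observable `y` given `v`. The h-loglikelihood
is `h(θ,v;y) = log (g θ v y) + log (p θ v)`, and `E_θ` integrates functions of
`z = (y, v)` against the joint density `g θ v y * p θ v` on `ℝ²`. Assuming the
conditional first Bartlett identities for `g` in both `θ` and `v`, and the first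
Bartlett identity for `p` in `θ`, one always has `E_θ[∂h/∂θ] = 0` and
`E_θ[∂h/∂v] = ∫ ∂p/∂v dv`; hence the first Bartlett identity for the h-likelihood
holds iff `∫ ∂p/∂v (θ,v) dv = 0` for all `θ ∈ Θ`. -/
theorem stmt_0
    (Θ : Set ℝ) (hΘ : IsOpen Θ)
    (p : ℝ → ℝ → ℝ) (g : ℝ → ℝ → ℝ → ℝ)
    (hp_pos : ∀ θ ∈ Θ, ∀ v : ℝ, 0 < p θ v)
    (hp_one : ∀ θ ∈ Θ, (∫ v : ℝ, p θ v) = 1)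
    (hg_pos : ∀ θ ∈ Θ, ∀ v y : ℝ, 0 < g θ v y)
    (hg_one : ∀ θ ∈ Θ, ∀ v : ℝ, (∫ y : ℝ, g θ v y) = 1)
    (hp_diffθ : ∀ θ ∈ Θ, ∀ v : ℝ, DifferentiableAt ℝ (fun t => p t v) θ)
    (hp_diffv : ∀ θ ∈ Θ, ∀ v : ℝ, DifferentiableAt ℝ (fun w => p θ w) v)
    (hg_diffθ : ∀ θ ∈ Θ, ∀ v y : ℝ, DifferentiableAt ℝ (fun t => g t v y) θ)
    (hg_diffv : ∀ θ ∈ Θ, ∀ v y : ℝ, DifferentiableAt ℝ (fun w => g θ w y) v)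
    -- integrability of all integrands appearing below
    (hint_gθ : ∀ θ ∈ Θ, ∀ v : ℝ, Integrable (fun y : ℝ => deriv (fun t => g t v y) θ))
    (hint_gv : ∀ θ ∈ Θ, ∀ v : ℝ, Integrable (fun y : ℝ => deriv (fun w => g θ w y) v))
    (hint_pθ : ∀ θ ∈ Θ, Integrable (fun v : ℝ => deriv (fun t => p t v) θ))
    (hint_pv : ∀ θ ∈ Θ, Integrable (fun v : ℝ => deriv (fun w => p θ w) v))
    (hint_hθ : ∀ θ ∈ Θ, Integrable (fun z : ℝ × ℝ =>
      deriv (fun t => Real.log (g t z.2 z.1) + Real.log (p t z.2)) θ * (g θ z.2 z.1 * p θ z.2)))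
    (hint_hv : ∀ θ ∈ Θ, Integrable (fun z : ℝ × ℝ =>
      deriv (fun w => Real.log (g θ w z.1) + Real.log (p θ w)) z.2 * (g θ z.2 z.1 * p θ z.2)))
    -- (i) conditional first Bartlett identities for g
    (hBg_θ : ∀ θ ∈ Θ, ∀ v : ℝ, (∫ y : ℝ, deriv (fun t => g t v y) θ) = 0)
    (hBg_v : ∀ θ ∈ Θ, ∀ v : ℝ, (∫ y : ℝ, deriv (fun w => g θ w y) v) = 0)
    -- (ii) first Bartlett identity for p in θ
    (hBp_θ : ∀ θ ∈ Θ, (∫ v : ℝ, deriv (fun t => p t v) θ) = 0) :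
    (∀ θ ∈ Θ,
      (∫ z : ℝ × ℝ,
        deriv (fun t => Real.log (g t z.2 z.1) + Real.log (p t z.2)) θ *
          (g θ z.2 z.1 * p θ z.2)) = 0 ∧
      (∫ z : ℝ × ℝ,
        deriv (fun w => Real.log (g θ w z.1) + Real.log (p θ w)) z.2 *
          (g θ z.2 z.1 * p θ z.2)) = ∫ v : ℝ, deriv (fun w => p θ w) v) ∧
    ((∀ θ ∈ Θ,
      (∫ z : ℝ × ℝ,
        deriv (fun t => Real.log (g t z.2 z.1) + Real.log (p t z.2)) θ *
          (g θ z.2 z.1 * p θ z.2)) = 0 ∧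
      (∫ z : ℝ × ℝ,
        deriv (fun w => Real.log (g θ w z.1) + Real.log (p θ w)) z.2 *
          (g θ z.2 z.1 * p θ z.2)) = 0) ↔
      (∀ θ ∈ Θ, (∫ v : ℝ, deriv (fun w => p θ w) v) = 0)) :=
  stmt_0_general Θ p g hp_pos hg_pos hg_one hp_diffθ hp_diffv hg_diffθ hg_diffv hint_gθ hint_gv
    hint_hθ hint_hv hBg_θ hBg_v hBp_θ
end

section
/- Let n ≥ 1 be an integer, θ > 0, and α ∈ (0,1), and set c(α,n) = n(α^{−1/n} − 1). If y_1, …, y_n, y_{n+1} are i.i.d. exponential random variables with rate θ and ȳ_n = (y_1 + ⋯ + y_n)/n, then P(y_{n+1} ≤ c(α,n)·ȳ_n) = 1 − α. That is, the interval [0, c(α,n)·ȳ_n] covers the future observation y_{n+1} with probability exactly 1 − α, for every θ. -/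
/-!
Write `S = y₀ + ⋯ + yₙ₋₁`, independent of `Y = yₙ`, and `c = α^(-1/n) - 1 ≥ 0`, so that the
event is `Y ≤ c S`. Given `S`, the exponential tail gives `P(Y > c S) = exp (-θ c S)`, so the
probability of missing is the moment generating function of `S` at `-θ c`, which for a sum of
`n` independent rate-`θ` exponentials is `(θ / (θ + θ c))ⁿ = (1 + c)⁻ⁿ = α`, whatever `θ` is.
-/

open MeasureTheory ProbabilityTheory Real Set

lemma expMeasure_eq_withDensity (θ : ℝ) :
    expMeasure θ = volume.withDensity (exponentialPDF θ) := rfl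

lemma measurable_exponentialPDF (θ : ℝ) : Measurable (exponentialPDF θ) :=
  (measurable_exponentialPDFReal θ).ennreal_ofReal

lemma exponentialPDF_mul_exp_mul {θ t : ℝ} (ht : t < θ) (x : ℝ) :
    exponentialPDF θ x * ENNReal.ofReal (exp (t * x)) =
      ENNReal.ofReal (θ / (θ - t)) * exponentialPDF (θ - t) x := by
  rcases lt_or_ge x 0 with hx | hx
  · simp [exponentialPDF_of_neg hx]
  have hθt : θ - t ≠ 0 := (sub_pos.2 ht).ne'
  rw [exponentialPDF_of_nonneg hx, exponentialPDF_of_nonneg hx,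
    ← ENNReal.ofReal_mul' (by positivity), ← ENNReal.ofReal_mul' (by positivity)]
  congr 1
  rw [mul_assoc, ← exp_add]
  field_simp
  ring_nf

lemma lintegral_exp_mul_expMeasure {θ t : ℝ} (ht : t < θ) :
    ∫⁻ x, ENNReal.ofReal (exp (t * x)) ∂expMeasure θ = ENNReal.ofReal (θ / (θ - t)) := by
  rw [expMeasure_eq_withDensity, lintegral_withDensity_eq_lintegral_mul _
      (measurable_exponentialPDF θ) (by fun_prop)]
  simp only [Pi.mul_apply, exponentialPDF_mul_exp_mul ht]
  rw [lintegral_const_mul _ (measurable_exponentialPDF _),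
    lintegral_exponentialPDF_eq_one (sub_pos.2 ht), mul_one]

lemma mgf_id_expMeasure {θ t : ℝ} (hθ : 0 ≤ θ) (ht : t < θ) :
    mgf id (expMeasure θ) t = θ / (θ - t) := by
  rw [mgf, integral_eq_lintegral_of_nonneg_ae (ae_of_all _ fun _ ↦ (exp_pos _).le)
      (by fun_prop)]
  simp only [id, lintegral_exp_mul_expMeasure ht]
  exact ENNReal.toReal_ofReal (div_nonneg hθ (sub_pos.2 ht).le)

lemma ae_nonneg_expMeasure (θ : ℝ) : ∀ᵐ x ∂expMeasure θ, 0 ≤ x := by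
  simp only [ae_iff, not_le]
  change expMeasure θ (Iio 0) = 0
  rw [expMeasure_eq_withDensity, withDensity_apply _ measurableSet_Iio]
  exact lintegral_exponentialPDF_of_nonpos le_rfl

lemma expMeasure_Ioi {θ z : ℝ} (hθ : 0 < θ) (hz : 0 ≤ z) :
    expMeasure θ (Ioi z) = ENNReal.ofReal (exp (-(θ * z))) := by
  have := isProbabilityMeasure_expMeasure hθ
  have hle : exp (-(θ * z)) ≤ 1 := exp_le_one_iff.2 (by nlinarith)
  rw [← compl_Iic, prob_compl_eq_one_sub measurableSet_Iic, ← ofReal_cdf,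
    cdf_expMeasure_eq hθ, if_pos hz, ← ENNReal.ofReal_one,
    ← ENNReal.ofReal_sub _ (sub_nonneg.2 hle), sub_sub_cancel]

section

variable {Ω : Type*} [MeasurableSpace Ω] {P : Measure Ω} {θ : ℝ}

lemma ae_nonneg_of_map_eq_expMeasure {Y : Ω → ℝ} (hY : AEMeasurable Y P)
    (hlaw : P.map Y = expMeasure θ) : ∀ᵐ ω ∂P, 0 ≤ Y ω :=
  ae_of_ae_map hY (hlaw ▸ ae_nonneg_expMeasure θ)

lemma mgf_of_map_eq_expMeasure {Y : Ω → ℝ} (hY : AEMeasurable Y P)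
    (hlaw : P.map Y = expMeasure θ) (hθ : 0 ≤ θ) {t : ℝ} (ht : t < θ) :
    mgf Y P t = θ / (θ - t) := by
  rw [← mgf_id_map hY, hlaw, mgf_id_expMeasure hθ ht]

end

section

variable {Ω : Type*} [MeasurableSpace Ω] {P : Measure Ω} [IsProbabilityMeasure P] {θ : ℝ}

lemma measure_mul_lt_eq_ofReal_mgf {S Y : Ω → ℝ} (hS : Measurable S) (hY : Measurable Y)
    (hind : IndepFun S Y P) (hlaw : P.map Y = expMeasure θ) (hθ : 0 < θ)
    (hS0 : ∀ᵐ ω ∂P, 0 ≤ S ω) {c : ℝ} (hc : 0 ≤ c) :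
    P {ω | c * S ω < Y ω} = ENNReal.ofReal (mgf S P (-(θ * c))) := by
  have hset : MeasurableSet {p : ℝ × ℝ | c * p.1 < p.2} :=
    measurableSet_lt (by fun_prop) measurable_snd
  have hS0' : ∀ᵐ x ∂P.map S, 0 ≤ x := (ae_map_iff hS.aemeasurable measurableSet_Ici).2 hS0
  have hint : Integrable (fun ω ↦ exp (-(θ * c) * S ω)) P := by
    refine Integrable.mono' (integrable_const 1) (by fun_prop) ?_
    filter_upwards [hS0] with ω hω
    rw [norm_of_nonneg (exp_pos _).le, exp_le_one_iff]
    nlinarith [mul_nonneg (mul_nonneg hθ.le hc) hω]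
  calc P {ω | c * S ω < Y ω}
      = (P.map S).prod (P.map Y) {p | c * p.1 < p.2} := by
        rw [← (indepFun_iff_map_prod_eq_prod_map_map hS.aemeasurable hY.aemeasurable).1 hind,
          Measure.map_apply (hS.prodMk hY) hset]
        rfl
    _ = ∫⁻ x, expMeasure θ (Ioi (c * x)) ∂P.map S := by
        rw [Measure.prod_apply hset, hlaw]
        rfl
    _ = ∫⁻ x, ENNReal.ofReal (exp (-(θ * c) * x)) ∂P.map S := by
        refine lintegral_congr_ae ?_
        filter_upwards [hS0'] with x hx
        rw [expMeasure_Ioi hθ (mul_nonneg hc hx), neg_mul, mul_assoc]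
    _ = ENNReal.ofReal (mgf S P (-(θ * c))) := by
        rw [lintegral_map (by fun_prop) hS, mgf,
          ofReal_integral_eq_lintegral_ofReal hint (ae_of_all _ fun _ ↦ (exp_pos _).le)]

theorem measure_le_mul_sum_eq_ofReal {ι : Type*} {y : ι → Ω → ℝ}
    (hmeas : ∀ i, Measurable (y i)) (hiid : iIndepFun y P)
    (hlaw : ∀ i, P.map (y i) = expMeasure θ) (hθ : 0 < θ) {s : Finset ι} {j : ι} (hj : j ∉ s)
    {c : ℝ} (hc : 0 ≤ c) :
    P {ω | y j ω ≤ c * ∑ i ∈ s, y i ω} = ENNReal.ofReal (1 - ((1 + c) ^ s.card)⁻¹) := by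
  have hS0 : ∀ᵐ ω ∂P, 0 ≤ ∑ i ∈ s, y i ω := by
    have := (Filter.eventually_all_finset s).2 fun i _ ↦
      ae_nonneg_of_map_eq_expMeasure (hmeas i).aemeasurable (hlaw i)
    filter_upwards [this] with ω hω
    exact Finset.sum_nonneg hω
  have hmgf : mgf (∑ i ∈ s, y i) P (-(θ * c)) = ((1 + c) ^ s.card)⁻¹ := by
    rw [hiid.mgf_sum hmeas, Finset.prod_congr rfl fun i _ ↦
      mgf_of_map_eq_expMeasure (hmeas i).aemeasurable (hlaw i) hθ.le (by nlinarith),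
      Finset.prod_const, sub_neg_eq_add, ← mul_one_add, div_mul_cancel_left₀ hθ.ne', inv_pow]
  have hind := hiid.indepFun_finsetSum_of_notMem hmeas hj
  rw [Finset.sum_fn] at hind hmgf
  have hsurv := measure_mul_lt_eq_ofReal_mgf (by fun_prop) (hmeas j) hind (hlaw j) hθ hS0 hc
  have hcompl : {ω | y j ω ≤ c * ∑ i ∈ s, y i ω} = {ω | c * ∑ i ∈ s, y i ω < y j ω}ᶜ := by
    ext ω
    simp
  rw [hcompl, prob_compl_eq_one_sub (measurableSet_lt (by fun_prop) (hmeas j)), hsurv, hmgf,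
    ← ENNReal.ofReal_one, ← ENNReal.ofReal_sub _ (by positivity)]

end

/-- Exact frequentist coverage of the highest density predictive interval
(paper's equation (40)).

If `y₀, …, yₙ` are i.i.d. exponential with rate `θ` and `ȳₙ` is the mean of the first
`n` of them, then with `c(α,n) = n (α^{-1/n} - 1)` the interval `[0, c(α,n) ȳₙ]`
covers the future observation `yₙ` with probability exactly `1 - α`, for every `θ`. -/
theorem stmt_17 {Ω : Type*} [MeasurableSpace Ω] (P : Measure Ω) [IsProbabilityMeasure P]
    (n : ℕ) (hn : 1 ≤ n) (θ : ℝ) (hθ : 0 < θ) (α : ℝ) (hα0 : 0 < α) (hα1 : α < 1)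
    (y : Fin (n + 1) → Ω → ℝ) (hmeas : ∀ i, Measurable (y i))
    (hiid : iIndepFun y P)
    (hlaw : ∀ i, Measure.map (y i) P = expMeasure θ) :
    P {ω | y (Fin.last n) ω ≤
        (n : ℝ) * (α ^ (-(1 : ℝ) / (n : ℝ)) - 1) *
          ((∑ i : Fin n, y (Fin.castSucc i) ω) / (n : ℝ))} =
      ENNReal.ofReal (1 - α) := by
  have hn0 : (n : ℝ) ≠ 0 := Nat.cast_ne_zero.2 (Nat.one_le_iff_ne_zero.1 hn)
  set a := α ^ (-(1 : ℝ) / n) with ha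
  have ha1 : 1 ≤ a :=
    one_le_rpow_of_pos_of_le_one_of_nonpos hα0 hα1.le (by simp [neg_div])
  have han : (a ^ n)⁻¹ = α := by
    rw [ha, ← rpow_natCast, ← rpow_mul hα0.le, ← rpow_neg hα0.le, neg_div, neg_mul, neg_neg,
      one_div_mul_cancel hn0, rpow_one]
  have hevent : {ω | y (Fin.last n) ω ≤ n * (a - 1) * ((∑ i : Fin n, y i.castSucc ω) / n)} =
      {ω | y (Fin.last n) ω ≤ (a - 1) * ∑ i ∈ Finset.univ.map Fin.castSuccEmb, y i ω} := by
    ext ω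
    simp only [Finset.sum_map, Fin.coe_castSuccEmb]
    congr! 1
    field_simp
  rw [hevent, measure_le_mul_sum_eq_ofReal hmeas hiid hlaw hθ (by simp) (sub_nonneg.2 ha1),
    Finset.card_map, Finset.card_univ, Fintype.card_fin, add_sub_cancel, han]
end
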